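/- arXiv:2011.14071 — 2 statements merged into one kernel-verified Lean document; each statement's English description precedes it below -/
import Mathlib

section
/- Let G be an extraspecial p-group of order p^{2a+1}. Then the number of distinct element centralizers of G equals (p^{2a} − 1)/(p − 1) + 1, and this equals the number of z-classes of G. -/
/-! Because commutators are central, `g ↦ ⁅g, x⁆` is a homomorphism `G →* Z(G)` with kernel
`C(x)`; for non-central `x` it is onto the center, of prime order `p`, so `C(x)` has index `p`.
Hence centralizers of non-central elements are pairwise incomparable, and `C(y) = C(x)` holds
exactly for the non-central `y` in `C_G(C(x))`. That group has order `p²`: for `g ∉ C(x)`,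
`y ↦ ⁅g, y⁆` maps it onto `Z(G)` with kernel `Z(G)`. So the `p^(2a+1) - p` non-central elements
fall into classes of size `p² - p`, one for each proper centralizer, and `G` is the remaining
centralizer. Every centralizer contains `G' ≤ Z(G)` and is therefore normal, so a z-class is
determined by a single centralizer. -/

/-- The set of element centralizers of `G`. -/
def cent (G : Type*) [Group G] : Set (Subgroup G) :=
  Set.range fun x : G => Subgroup.centralizer {x}

/-- The number of distinct element centralizers of `G`. -/
noncomputable def numCent (G : Type*) [Group G] : ℕ := (cent G).ncard

/-- The center of the centralizer `C(x)`, viewed as a subgroup of `G`. -/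
def centerCentralizer {G : Type*} [Group G] (x : G) : Subgroup G :=
  Subgroup.centralizer {x} ⊓
    Subgroup.centralizer ((Subgroup.centralizer {x} : Subgroup G) : Set G)

/-- `G` is an F-group: for non-central `x, y`, `C(x) ≤ C(y)` implies `C(x) = C(y)`. -/
def IsFGroup (G : Type*) [Group G] : Prop :=
  ∀ x y : G, x ∉ Subgroup.center G → y ∉ Subgroup.center G →
    Subgroup.centralizer {x} ≤ Subgroup.centralizer {y} →
    Subgroup.centralizer ({x} : Set G) = Subgroup.centralizer {y}

/-- The set of conjugates of a subgroup `H` of `G`. -/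
def conjugates {G : Type*} [Group G] (H : Subgroup G) : Set (Subgroup G) :=
  {K | ∃ g : G, K = Subgroup.map (MulAut.conj g).toMonoidHom H}

/-- The number of `z`-classes of `G`: elements are `z`-equivalent when their
centralizers are conjugate in `G`, so the number of `z`-classes is the number of
distinct conjugacy classes of element centralizers. -/
noncomputable def numZClasses (G : Type*) [Group G] : ℕ :=
  (Set.range fun x : G => conjugates (Subgroup.centralizer {x})).ncard

open scoped commutatorElement

open Subgroup

theorem Set.ncard_eq_ncard_image_mul_of_ncard_fiber {α β : Type*} {s : Set α} (hs : s.Finite)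
    (f : α → β) {n : ℕ} (h : ∀ a ∈ s, {b | b ∈ s ∧ f b = f a}.ncard = n) :
    s.ncard = (f '' s).ncard * n := by
  classical
  rw [ncard_eq_toFinset_card s hs, ncard_eq_toFinset_card _ (hs.image f),
    hs.toFinset_image f (hs.image f), Finset.card_eq_sum_card_image f, Finset.sum_const_nat]
  intro b hb
  obtain ⟨a, ha, rfl⟩ := Finset.mem_image.mp hb
  rw [← h a (hs.mem_toFinset.mp ha), ← ncard_coe_finset]
  congr 1
  ext
  simp

theorem Nat.eq_div_of_mul_sq_sub_self {p n N : ℕ} (hp : 1 < p)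
    (h : N * (p ^ 2 - p) = p ^ (n + 1) - p) : N = (p ^ n - 1) / (p - 1) := by
  have hmul : N * (p - 1) * p = (p ^ n - 1) * p := by
    rw [mul_assoc, Nat.sub_one_mul, ← sq, h, Nat.sub_one_mul, ← pow_succ]
  rw [← Nat.eq_of_mul_eq_mul_right (by omega) hmul, Nat.mul_div_cancel _ (by omega)]

namespace Subgroup

variable {G : Type*} [Group G]

theorem eq_top_of_prime_card_of_mem (hp : (Nat.card G).Prime) {K : Subgroup G} {z : G}
    (hzK : z ∈ K) (hz : z ≠ 1) : K = ⊤ :=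
  haveI := Fact.mk hp
  K.eq_bot_or_eq_top_of_prime_card.resolve_left fun h => hz (mem_bot.mp (h ▸ hzK))

theorem mem_centralizer_singleton_comm {g x : G} :
    g ∈ centralizer {x} ↔ x ∈ centralizer {g} := by
  rw [mem_centralizer_singleton_iff, mem_centralizer_singleton_iff, eq_comm]

theorem mem_centralizer_centralizer_singleton_iff {x y : G} :
    y ∈ centralizer (centralizer {x} : Set G) ↔ centralizer {x} ≤ centralizer {y} := by
  rw [mem_centralizer_iff, SetLike.le_def]
  simp only [SetLike.mem_coe, mem_centralizer_singleton_iff]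

theorem centralizer_singleton_eq_top_iff {x : G} : centralizer {x} = ⊤ ↔ x ∈ center G := by
  rw [centralizer_eq_top_iff_subset, Set.singleton_subset_iff, SetLike.mem_coe]

theorem exists_notMem_centralizer_singleton {x : G} (hx : x ∉ center G) :
    ∃ g, g ∉ centralizer {x} := by
  by_contra! h
  exact hx (mem_center_iff.mpr fun g => mem_centralizer_singleton_iff.mp (h g))

end Subgroup

section CommutatorLeCenter

variable {G : Type*} [Group G]

theorem commutatorElement_mem_commutator (g h : G) : ⁅g, h⁆ ∈ commutator G :=
  commutator_mem_commutator (mem_top g) (mem_top h)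

theorem commutatorElement_eq_one_iff_mem_centralizer {g x : G} :
    ⁅g, x⁆ = 1 ↔ x ∈ centralizer {g} := by
  rw [commutatorElement_eq_one_iff_mul_comm, mem_centralizer_singleton_iff, eq_comm]

theorem commutatorElement_mul_right_of_le_center (hc : commutator G ≤ center G) (g x y : G) :
    ⁅g, x * y⁆ = ⁅g, x⁆ * ⁅g, y⁆ := by
  have hy := mem_center_iff.mp (hc (commutatorElement_mem_commutator g y))
  rw [commutatorElement_mul_right_eq_mul_conj, mul_assoc _ x, hy x, ← mul_assoc,
    mul_inv_cancel_right]

def commutatorHom (hc : commutator G ≤ center G) (g : G) : G →* center G where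
  toFun x := ⟨⁅g, x⁆, hc (commutatorElement_mem_commutator g x)⟩
  map_one' := Subtype.ext (commutatorElement_one_right g)
  map_mul' x y := Subtype.ext (commutatorElement_mul_right_of_le_center hc g x y)

theorem ker_commutatorHom (hc : commutator G ≤ center G) (g : G) :
    (commutatorHom hc g).ker = centralizer {g} := by
  ext x
  rw [MonoidHom.mem_ker, ← commutatorElement_eq_one_iff_mem_centralizer, ← Subtype.val_inj]
  rfl

theorem index_centralizer_singleton (hc : commutator G ≤ center G)
    (hp : (Nat.card (center G)).Prime) {x : G} (hx : x ∉ center G) :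
    (centralizer {x}).index = Nat.card (center G) := by
  obtain ⟨g, hg⟩ := exists_notMem_centralizer_singleton hx
  have hrange : (commutatorHom hc x).range = ⊤ :=
    eq_top_of_prime_card_of_mem hp (MonoidHom.mem_range.mpr ⟨g, rfl⟩) fun h =>
      hg (ker_commutatorHom hc x ▸ MonoidHom.mem_ker.mpr h)
  rw [← ker_commutatorHom hc, index_ker, hrange, card_top]

theorem isFGroup_of_commutator_le_center (hc : commutator G ≤ center G)
    (hp : (Nat.card (center G)).Prime) : IsFGroup G := by
  intro x y hx hy hxy
  have h := relIndex_mul_index hxy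
  rw [index_centralizer_singleton hc hp hx, index_centralizer_singleton hc hp hy,
    mul_eq_right₀ hp.ne_zero, relIndex_eq_one] at h
  exact hxy.antisymm h

theorem card_centralizer_centralizer_singleton (hc : commutator G ≤ center G)
    (hp : (Nat.card (center G)).Prime) {x : G} (hx : x ∉ center G) :
    Nat.card (centralizer (centralizer {x} : Set G)) = Nat.card (center G) ^ 2 := by
  set A := centralizer (centralizer {x} : Set G)
  obtain ⟨g, hg⟩ := exists_notMem_centralizer_singleton hx
  have hxA : x ∈ A := mem_centralizer_centralizer_singleton_iff.mpr le_rfl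
  have hinf : centralizer {g} ⊓ A = center G := by
    refine le_antisymm (fun y hy => ?_)
      (le_inf (center_le_centralizer _) (center_le_centralizer _))
    obtain ⟨hyg, hyA⟩ := mem_inf.mp hy
    by_contra hyZ
    have hxy := isFGroup_of_commutator_le_center hc hp x y hx hyZ
      (mem_centralizer_centralizer_singleton_iff.mp hyA)
    exact hg (hxy ▸ mem_centralizer_singleton_comm.mp hyg)
  have hmap : A.map (commutatorHom hc g) = ⊤ :=
    eq_top_of_prime_card_of_mem hp (mem_map_of_mem _ hxA) fun h =>
      hg (mem_centralizer_singleton_comm.mp (ker_commutatorHom hc g ▸ MonoidHom.mem_ker.mpr h))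
  have hrelIndex : (center G).relIndex A = Nat.card (A.map (commutatorHom hc g)) := by
    rw [← relIndex_ker, ker_commutatorHom, ← inf_relIndex_right (centralizer {g}) A, hinf]
  rw [← relIndex_bot_left, ← relIndex_mul_relIndex ⊥ (center G) A bot_le
    (center_le_centralizer _), relIndex_bot_left, hrelIndex, hmap, card_top, sq]

theorem setOf_centralizer_singleton_eq (hc : commutator G ≤ center G)
    (hp : (Nat.card (center G)).Prime) {x : G} (hx : x ∉ center G) :
    {y | y ∉ center G ∧ centralizer {y} = centralizer {x}} =
      (centralizer (centralizer {x} : Set G) : Set G) \ center G := by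
  ext y
  simp only [Set.mem_ofPred_eq, Set.mem_sdiff, SetLike.mem_coe,
    mem_centralizer_centralizer_singleton_iff]
  constructor
  · rintro ⟨hy, hyx⟩
    exact ⟨hyx.ge, hy⟩
  · rintro ⟨hxy, hy⟩
    exact ⟨hy, (isFGroup_of_commutator_le_center hc hp x y hx hy hxy).symm⟩

theorem ncard_setOf_centralizer_singleton_eq [Finite G] (hc : commutator G ≤ center G)
    (hp : (Nat.card (center G)).Prime) {x : G} (hx : x ∉ center G) :
    {y | y ∉ center G ∧ centralizer {y} = centralizer {x}}.ncard =
      Nat.card (center G) ^ 2 - Nat.card (center G) := by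
  rw [setOf_centralizer_singleton_eq hc hp hx, Set.ncard_sdiff (center_le_centralizer _),
    ← Nat.card_coe_set_eq, ← Nat.card_coe_set_eq, SetLike.coe_sort_coe, SetLike.coe_sort_coe,
    card_centralizer_centralizer_singleton hc hp hx]

theorem ncard_image_centralizer_mul [Finite G] (hc : commutator G ≤ center G)
    (hp : (Nat.card (center G)).Prime) :
    ((fun x : G => centralizer {x}) '' {x | x ∉ center G}).ncard *
      (Nat.card (center G) ^ 2 - Nat.card (center G)) = Nat.card G - Nat.card (center G) := by
  rw [← Set.ncard_eq_ncard_image_mul_of_ncard_fiber (s := {x | x ∉ center G}) (Set.toFinite _) _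
    fun x hx => ncard_setOf_centralizer_singleton_eq hc hp hx]
  exact Set.ncard_compl (center G : Set G)

end CommutatorLeCenter

section CentralizerCount

variable {G : Type*} [Group G]

theorem conjugates_eq_singleton (H : Subgroup G) [H.Normal] : conjugates H = {H} := by
  ext K
  simp only [conjugates, Set.mem_ofPred_eq, Set.mem_singleton_iff]
  constructor
  · rintro ⟨g, rfl⟩
    exact Normal.map_conj_eq H g
  · rintro rfl
    exact ⟨1, (Normal.map_conj_eq _ 1).symm⟩

theorem numZClasses_eq_numCent (h : ∀ x : G, (centralizer {x}).Normal) :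
    numZClasses G = numCent G := by
  have hconj : (fun x : G => conjugates (centralizer {x})) =
      (fun H => {H}) ∘ fun x : G => centralizer {x} :=
    funext fun x => haveI := h x; conjugates_eq_singleton _
  rw [numZClasses, hconj, Set.range_comp, Set.ncard_image_of_injective _ Set.singleton_injective]
  rfl

theorem cent_eq_insert_top_image :
    cent G = insert ⊤ ((fun x : G => centralizer {x}) '' {x | x ∉ center G}) := by
  ext H
  simp only [cent, Set.mem_range, Set.mem_insert_iff, Set.mem_image, Set.mem_ofPred_eq]
  constructor
  · rintro ⟨x, rfl⟩
    by_cases hx : x ∈ center G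
    · exact .inl (centralizer_singleton_eq_top_iff.mpr hx)
    · exact .inr ⟨x, hx, rfl⟩
  · rintro (rfl | ⟨x, -, rfl⟩)
    · exact ⟨1, centralizer_singleton_eq_top_iff.mpr (one_mem _)⟩
    · exact ⟨x, rfl⟩

theorem numCent_eq_ncard_image_add_one [Finite G] :
    numCent G = ((fun x : G => centralizer {x}) '' {x | x ∉ center G}).ncard + 1 := by
  rw [numCent, cent_eq_insert_top_image, Set.ncard_insert_of_notMem]
  rintro ⟨x, hx, hxtop⟩
  exact hx (centralizer_singleton_eq_top_iff.mp hxtop)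

end CentralizerCount

theorem stmt10_general (G : Type*) [Group G] (p a : ℕ) (hp : p.Prime)
    (hcard : Nat.card G = p ^ (2 * a + 1))
    (hZ : Subgroup.center G = commutator G)
    (hZcard : Nat.card (Subgroup.center G) = p) :
    numCent G = (p ^ (2 * a) - 1) / (p - 1) + 1 ∧
      numZClasses G = (p ^ (2 * a) - 1) / (p - 1) + 1 := by
  have : Finite G := Nat.finite_of_card_ne_zero (hcard ▸ pow_ne_zero _ hp.ne_zero)
  have hc : commutator G ≤ center G := hZ.ge
  have hcent : numCent G = (p ^ (2 * a) - 1) / (p - 1) + 1 := by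
    have hcount := ncard_image_centralizer_mul hc (hZcard ▸ hp)
    rw [hcard, hZcard] at hcount
    rw [numCent_eq_ncard_image_add_one, Nat.eq_div_of_mul_sq_sub_self hp.one_lt hcount]
  have hnormal (x : G) : (centralizer {x}).Normal :=
    .of_commutator_le (h := hc.trans (center_le_centralizer _))
  exact ⟨hcent, (numZClasses_eq_numCent hnormal).trans hcent⟩

theorem stmt10 (G : Type*) [Group G] [Finite G] (p a : ℕ) (hp : p.Prime)
    (hcard : Nat.card G = p ^ (2 * a + 1))
    (hZ : Subgroup.center G = commutator G)
    (hPhi : frattini G = commutator G)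
    (hZcard : Nat.card (Subgroup.center G) = p) :
    numCent G = (p ^ (2 * a) - 1) / (p - 1) + 1 ∧
      numZClasses G = (p ^ (2 * a) - 1) / (p - 1) + 1 :=
  stmt10_general G p a hp hcard hZ hZcard
end

section
/- Let G be a finite group of conjugate type (p, 1), i.e., [G : C(x)] = p for all non-central x ∈ G. Then every proper centralizer of G is non-abelian if and only if [G : Z(G)] > p^2, and G has a unique non-abelian centralizer (namely G itself) if and only if G/Z(G) ≅ C_p × C_p. -/
/-! Write `n = [G : Z(G)]`. Every `C(x)` contains `Z(G)`, so `[C(x) : Z(G)] = n / p` for each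
non-central `x`. By Cauchy some `u` has image of order `p` in `G/Z(G)`; as `u ∈ C(u)`, `p`
divides `n / p`, so `n ≥ p²`. If `n = p²`, each `C(x)/Z(G)` has prime order, hence is cyclic,
and `C(x)` is abelian. Conversely, equal indices make `G` an F-group, so if `C(x)` is abelian
and `g ∉ C(x)` then `C(x) ∩ C(g) = Z(G)`, whence `n ≤ [G : C(x)] [G : C(g)] = p²`. So some
(equivalently every) proper centralizer is abelian iff `n = p²`; and since `G/Z(G)` is never
nontrivial cyclic, `n = p²` iff `G/Z(G) ≅ C_p × C_p`. -/

open Subgroup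

section General

variable {G : Type*} [Group G]

theorem Subgroup.isMulCommutative_of_relIndex_center_prime {H : Subgroup G}
    (hH : ((center G).relIndex H).Prime) : IsMulCommutative H := by
  set Z := (center G).subgroupOf H
  have : Fact (Nat.card (H ⧸ Z)).Prime := ⟨index_eq_card Z ▸ hH⟩
  have : IsCyclic (H ⧸ Z) := isCyclic_of_prime_card rfl
  refine (QuotientGroup.mk' Z).isMulCommutative_of_isCyclic_of_ker_le_center ?_
  rw [QuotientGroup.ker_mk']
  intro a ha
  exact mem_center_iff.mpr fun b => Subtype.ext (mem_center_iff.mp ha b)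

theorem Subgroup.orderOf_mk_dvd_relIndex {N H : Subgroup G} [N.Normal] {h : G} (hh : h ∈ H) :
    orderOf (h : G ⧸ N) ∣ N.relIndex H := by
  let f : H ⧸ N.subgroupOf H →* G ⧸ N := QuotientGroup.map _ _ H.subtype le_rfl
  calc orderOf (h : G ⧸ N) = orderOf (f (⟨h, hh⟩ : H)) := rfl
    _ ∣ orderOf ((⟨h, hh⟩ : H) : H ⧸ N.subgroupOf H) := orderOf_map_dvd f _
    _ ∣ Nat.card (H ⧸ N.subgroupOf H) := _root_.orderOf_dvd_natCard _
    _ = N.relIndex H := (index_eq_card _).symm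

theorem Subgroup.centralizer_singleton_eq_top_iff_s19 {x : G} :
    centralizer {x} = ⊤ ↔ x ∈ center G := by
  rw [centralizer_eq_top_iff_subset, Set.singleton_subset_iff, SetLike.mem_coe]

theorem isFGroup_of_index_centralizer_eq {n : ℕ} (hn : n ≠ 0)
    (h : ∀ x : G, x ∉ center G → (centralizer {x}).index = n) : IsFGroup G := by
  intro x y hx hy hle
  refine le_antisymm hle (relIndex_eq_one.mp ?_)
  have := relIndex_mul_index hle
  rw [h x hx, h y hy] at this
  exact (Nat.mul_eq_right hn).mp this

theorem IsFGroup.centralizer_inf_centralizer_eq_center (hF : IsFGroup G) {x g : G}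
    [IsMulCommutative (centralizer {x})] (hg : g ∉ centralizer {x}) :
    centralizer {x} ⊓ centralizer {g} = center G := by
  refine le_antisymm (fun y ⟨hyx, hyg⟩ => ?_)
    (le_inf (center_le_centralizer _) (center_le_centralizer _))
  by_contra hy
  have hx : x ∉ center G := fun hx => hg (centralizer_singleton_eq_top_iff_s19.mpr hx ▸ mem_top g)
  have hle : centralizer {x} ≤ centralizer {y} := fun c hc =>
    mem_centralizer_singleton_iff.mpr (setLike_mul_comm hc hyx)
  refine hg (hF x y hx hy hle ▸ ?_)
  exact mem_centralizer_singleton_iff.mpr (mem_centralizer_singleton_iff.mp hyg).symm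

theorem ncard_setOf_not_isMulCommutative_cent_eq_one_iff (hna : center G ≠ ⊤) :
    {H ∈ cent G | ¬ IsMulCommutative H}.ncard = 1 ↔
      ∀ x ∉ center G, IsMulCommutative (centralizer {x}) := by
  have htop : ⊤ ∈ {H ∈ cent G | ¬ IsMulCommutative H} := by
    refine ⟨⟨1, centralizer_singleton_eq_top_iff_s19.mpr (one_mem _)⟩, fun hcomm => hna ?_⟩
    exact (eq_top_iff' _).mpr fun a => mem_center_iff.mpr fun b =>
      setLike_mul_comm (mem_top b) (mem_top a)
  rw [Set.ncard_eq_one]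
  constructor
  · rintro ⟨K, hK⟩ x hx
    by_contra hnc
    have hx_mem : centralizer {x} ∈ {H ∈ cent G | ¬ IsMulCommutative H} :=
      ⟨⟨x, rfl⟩, hnc⟩
    rw [hK] at htop hx_mem
    exact hx (centralizer_singleton_eq_top_iff_s19.mp (hx_mem.trans htop.symm))
  · refine fun hall => ⟨⊤, Set.eq_singleton_iff_unique_mem.mpr ⟨htop, ?_⟩⟩
    rintro _ ⟨⟨x, rfl⟩, hnc⟩
    exact centralizer_singleton_eq_top_iff_s19.mpr (not_not.mp fun hx => hnc (hall x hx))

end General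

section Classification

variable {p : ℕ} [hp : Fact p.Prime]

theorem nonempty_addEquiv_zmod_prod_of_natCard_eq_sq (V : Type*) [AddCommGroup V]
    [Module (ZMod p) V] [Finite V] (hV : Nat.card V = p ^ 2) :
    Nonempty (V ≃+ ZMod p × ZMod p) := by
  have : Module.Finite (ZMod p) V := Module.Finite.of_finite
  have hrank : Module.finrank (ZMod p) V = Module.finrank (ZMod p) (ZMod p × ZMod p) := by
    rw [Module.finrank_prod, Module.finrank_self]
    rw [Module.natCard_eq_pow_finrank (K := ZMod p), Nat.card_zmod] at hV
    exact Nat.pow_right_injective hp.out.two_le hV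
  exact ⟨(FiniteDimensional.nonempty_linearEquiv_of_finrank_eq hrank).some.toAddEquiv⟩

theorem nonempty_mulEquiv_zmod_prod_of_natCard_eq_sq_of_not_isCyclic {Q : Type*} [Group Q]
    (hQ : Nat.card Q = p ^ 2) (hcyc : ¬ IsCyclic Q) :
    Nonempty (Q ≃* Multiplicative (ZMod p × ZMod p)) := by
  have : Finite Q := Nat.finite_of_card_ne_zero (hQ ▸ pow_ne_zero 2 hp.out.ne_zero)
  let : CommGroup Q := IsPGroup.commGroupOfCardEqPrimeSq hQ
  have hexp : AddMonoid.exponent (Additive Q) = p :=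
    (not_isCyclic_iff_exponent_eq_prime hp.out hQ).mp hcyc
  let : Module (ZMod p) (Additive Q) :=
    AddCommGroup.zmodModule (hexp ▸ AddMonoid.exponent_nsmul_eq_zero)
  obtain ⟨e⟩ := nonempty_addEquiv_zmod_prod_of_natCard_eq_sq (Additive Q) hQ
  exact ⟨(MulEquiv.multiplicativeAdditive Q).symm.trans (AddEquiv.toMultiplicative e)⟩

theorem index_center_eq_sq_iff_nonempty_mulEquiv {G : Type*} [Group G] (hna : center G ≠ ⊤) :
    (center G).index = p ^ 2 ↔
      Nonempty ((G ⧸ center G) ≃* Multiplicative (ZMod p × ZMod p)) := by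
  rw [index_eq_card]
  refine ⟨fun hn => nonempty_mulEquiv_zmod_prod_of_natCard_eq_sq_of_not_isCyclic hn ?_,
    fun ⟨e⟩ => ?_⟩
  · exact fun _ => hna <|
      center_eq_top_iff.mpr (isMulCommutative_of_isCyclic_quotient_center_self G)
  · rw [Nat.card_congr e.toEquiv, Nat.card_congr Multiplicative.toAdd, Nat.card_prod,
      Nat.card_zmod, sq]

end Classification

section ConjugateTypePrime

variable {G : Type*} [Group G] {p : ℕ}

theorem relIndex_center_centralizer_mul_eq_index
    (h : ∀ x : G, x ∉ center G → (centralizer {x}).index = p) {x : G} (hx : x ∉ center G) :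
    (center G).relIndex (centralizer {x}) * p = (center G).index := by
  rw [← h x hx]
  exact relIndex_mul_index (center_le_centralizer {x})

theorem index_center_le_sq_of_isMulCommutative (hp : p ≠ 0)
    (h : ∀ x : G, x ∉ center G → (centralizer {x}).index = p) {x : G} (hx : x ∉ center G)
    [IsMulCommutative (centralizer {x})] : (center G).index ≤ p ^ 2 := by
  obtain ⟨g, hg⟩ := SetLike.exists_not_mem_of_ne_top (centralizer {x})
    (mt centralizer_singleton_eq_top_iff_s19.mp hx)
  have hgZ : g ∉ center G := fun hg' => hg (center_le_centralizer {x} hg')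
  calc (center G).index = (centralizer {x} ⊓ centralizer {g}).index := by
        rw [(isFGroup_of_index_centralizer_eq hp h).centralizer_inf_centralizer_eq_center hg]
    _ ≤ (centralizer {x}).index * (centralizer {g}).index := index_inf_le
    _ = p ^ 2 := by rw [h x hx, h g hgZ, sq]

theorem sq_le_index_center [Finite G] (hp : p.Prime)
    (h : ∀ x : G, x ∉ center G → (centralizer {x}).index = p) (hna : center G ≠ ⊤) :
    p ^ 2 ≤ (center G).index := by
  have := Fact.mk hp
  obtain ⟨x, hx⟩ := SetLike.exists_not_mem_of_ne_top (center G) hna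
  have hpn : p ∣ Nat.card (G ⧸ center G) := by
    rw [← index_eq_card, ← relIndex_center_centralizer_mul_eq_index h hx]
    exact dvd_mul_left p _
  obtain ⟨q, hq⟩ := exists_prime_orderOf_dvd_card' p hpn
  obtain ⟨u, rfl⟩ := QuotientGroup.mk_surjective q
  have hu : u ∉ center G := fun hu => hp.one_lt.ne' <| by
    rw [← hq, (QuotientGroup.eq_one_iff u).mpr hu, orderOf_one]
  have hdvd : p ∣ (center G).relIndex (centralizer {u}) :=
    hq ▸ orderOf_mk_dvd_relIndex (mem_centralizer_singleton_iff.mpr rfl)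
  have hne : (center G).relIndex (centralizer {u}) ≠ 0 := left_ne_zero_of_mul <|
    (relIndex_center_centralizer_mul_eq_index h hu).symm ▸ index_ne_zero_of_finite
  calc p ^ 2 = p * p := sq p
    _ ≤ (center G).relIndex (centralizer {u}) * p :=
        Nat.mul_le_mul_right p (Nat.le_of_dvd (Nat.pos_of_ne_zero hne) hdvd)
    _ = (center G).index := relIndex_center_centralizer_mul_eq_index h hu

theorem isMulCommutative_centralizer_of_index_center_eq_sq (hp : p.Prime)
    (h : ∀ x : G, x ∉ center G → (centralizer {x}).index = p)
    (hn : (center G).index = p ^ 2) {x : G} (hx : x ∉ center G) :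
    IsMulCommutative (centralizer {x}) := by
  apply isMulCommutative_of_relIndex_center_prime
  have hmul := relIndex_center_centralizer_mul_eq_index h hx
  rw [hn, sq] at hmul
  rwa [Nat.eq_of_mul_eq_mul_right hp.pos hmul]

theorem exists_isMulCommutative_centralizer_iff [Finite G] (hp : p.Prime)
    (h : ∀ x : G, x ∉ center G → (centralizer {x}).index = p) (hna : center G ≠ ⊤) :
    (∃ x ∉ center G, IsMulCommutative (centralizer {x})) ↔ (center G).index = p ^ 2 := by
  refine ⟨fun ⟨x, hx, _⟩ => ?_, fun hn => ?_⟩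
  · exact le_antisymm (index_center_le_sq_of_isMulCommutative hp.ne_zero h hx)
      (sq_le_index_center hp h hna)
  · obtain ⟨x, hx⟩ := SetLike.exists_not_mem_of_ne_top (center G) hna
    exact ⟨x, hx, isMulCommutative_centralizer_of_index_center_eq_sq hp h hn hx⟩

theorem forall_isMulCommutative_centralizer_iff [Finite G] (hp : p.Prime)
    (h : ∀ x : G, x ∉ center G → (centralizer {x}).index = p) (hna : center G ≠ ⊤) :
    (∀ x ∉ center G, IsMulCommutative (centralizer {x})) ↔ (center G).index = p ^ 2 := by
  refine ⟨fun hall => ?_,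
    fun hn x hx => isMulCommutative_centralizer_of_index_center_eq_sq hp h hn hx⟩
  obtain ⟨x, hx⟩ := SetLike.exists_not_mem_of_ne_top (center G) hna
  exact (exists_isMulCommutative_centralizer_iff hp h hna).mp ⟨x, hx, hall x hx⟩

end ConjugateTypePrime

theorem stmt19 (G : Type*) [Group G] [Finite G] (p : ℕ) (hp : p.Prime)
    (hna : Subgroup.center G ≠ ⊤)
    (h : ∀ x : G, x ∉ Subgroup.center G → (Subgroup.centralizer {x}).index = p) :
    ((∀ x : G, x ∉ Subgroup.center G →
        ¬ ∀ a ∈ Subgroup.centralizer ({x} : Set G),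
            ∀ b ∈ Subgroup.centralizer ({x} : Set G), a * b = b * a) ↔
      p ^ 2 < (Subgroup.center G).index) ∧
    (({H ∈ cent G | ¬ ∀ a ∈ H, ∀ b ∈ H, a * b = b * a} :
        Set (Subgroup G)).ncard = 1 ↔
      Nonempty ((G ⧸ Subgroup.center G) ≃* Multiplicative (ZMod p × ZMod p))) := by
  have := Fact.mk hp
  simp_rw [← isMulCommutative_iff_of_setLike]
  have hexists := exists_isMulCommutative_centralizer_iff hp h hna
  refine ⟨⟨fun hnone => ?_, fun hlt x hx hcomm => hlt.ne' (hexists.mp ⟨x, hx, hcomm⟩)⟩,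
    ?_⟩
  · refine (sq_le_index_center hp h hna).lt_of_ne fun hn => ?_
    obtain ⟨x, hx, hcomm⟩ := hexists.mpr hn.symm
    exact hnone x hx hcomm
  · rw [ncard_setOf_not_isMulCommutative_cent_eq_one_iff hna,
      forall_isMulCommutative_centralizer_iff hp h hna,
      index_center_eq_sq_iff_nonempty_mulEquiv hna]
end
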